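/- arXiv:1408.5609 — 2 statements merged into one kernel-verified Lean document; each statement's English description precedes it below -/
import Mathlib

section
/- Let f : ℝ → ℝ be bounded and uniformly continuous, and let χ ∈ L¹(ℝ) be a bounded kernel satisfying ∫_ℝ χ(z - t) dt = 1 for all z, sup_z ∫_ℝ |χ(z - t)| dt < ∞, and for every γ > 0, lim_{w→∞} ∫_{|z-t| ≥ γ} |χ_w(z-t)| dt = 0 uniformly in z, where χ_w(u) = w χ(w u). Then the Kantorovich convolution operators S_w f(z) = ∫_ℝ χ_w(z - t) ( (w/2) ∫_{t-1/w}^{t+1/w} f(u) du ) dt converge to f uniformly on ℝ as w → ∞. -/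
open MeasureTheory Set

/-!
Since `∫ χ_w = 1`, the error `S_w f z - f z` is the integral of `χ_w (z - t)` against
`m_w f t - f z`, where `m_w f t = kantorovichMean f w t` is the mean of `f` over
`[t - 1/w, t + 1/w]`. Split the integral at `|z - t| = δ/2`. Near `z`, once `1/w ≤ δ/2` every
point of the averaging interval is within `δ` of `z`, so uniform continuity makes
`|m_w f t - f z|` small, and that part is at most this bound times `‖χ‖₁`. Far from `z`,
`|m_w f t - f z| ≤ 2 sup |f|` while the tail mass of `|χ_w|` tends to `0` uniformly in `z`.
-/

noncomputable def kantorovichMean (f : ℝ → ℝ) (w t : ℝ) : ℝ :=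
  (w / 2) * ∫ u in Icc (t - 1 / w) (t + 1 / w), f u

theorem integral_mul_comp_mul_sub (g : ℝ → ℝ) {w : ℝ} (hw : 0 < w) (z : ℝ) :
    ∫ t, w * g (w * (z - t)) = ∫ u, g u := by
  rw [integral_const_mul, integral_sub_left_eq_self (fun t => g (w * t)) volume z,
    Measure.integral_comp_mul_left, abs_of_pos (inv_pos.2 hw), smul_eq_mul,
    mul_inv_cancel_left₀ hw.ne']

theorem integral_abs_mul_comp_mul_sub (g : ℝ → ℝ) {w : ℝ} (hw : 0 < w) (z : ℝ) :
    ∫ t, |w * g (w * (z - t))| = ∫ u, |g u| := by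
  simp_rw [abs_mul, abs_of_pos hw]
  exact integral_mul_comp_mul_sub (fun u => |g u|) hw z

theorem MeasureTheory.Integrable.mul_comp_mul_sub {g : ℝ → ℝ} (hg : Integrable g) {w : ℝ}
    (hw : w ≠ 0) (z : ℝ) : Integrable (fun t => w * g (w * (z - t))) :=
  ((hg.comp_mul_left' hw).comp_sub_left z).const_mul w

theorem abs_kantorovichMean_sub_le {f : ℝ → ℝ} {w t c η : ℝ} (hw : 0 < w)
    (hf : IntegrableOn f (Icc (t - 1 / w) (t + 1 / w)))
    (hη : ∀ u ∈ Icc (t - 1 / w) (t + 1 / w), |f u - c| ≤ η) :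
    |kantorovichMean f w t - c| ≤ η := by
  have hvol : volume.real (Icc (t - 1 / w) (t + 1 / w)) = 2 / w := by
    rw [Real.volume_real_Icc_of_le (by linarith [one_div_pos.2 hw])]
    ring
  have hmean : kantorovichMean f w t - c
      = (w / 2) * ∫ u in Icc (t - 1 / w) (t + 1 / w), (f u - c) := by
    rw [integral_sub hf (integrableOn_const measure_Icc_lt_top.ne), setIntegral_const, hvol,
      smul_eq_mul, kantorovichMean]
    field_simp
  have hint := norm_setIntegral_le_of_norm_le_const (measure_Icc_lt_top (μ := volume))
    (f := fun u => f u - c) hη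
  rw [hvol] at hint
  rw [hmean, abs_mul, abs_of_pos (by positivity)]
  calc w / 2 * |∫ u in Icc (t - 1 / w) (t + 1 / w), (f u - c)| ≤ w / 2 * (η * (2 / w)) := by
        gcongr; exact hint
    _ = η := by field_simp

theorem abs_kantorovichMean_sub_le_two_mul {f : ℝ → ℝ} {C : ℝ} (hf : LocallyIntegrable f)
    (hC : ∀ x, |f x| ≤ C) {w : ℝ} (hw : 0 < w) (t z : ℝ) :
    |kantorovichMean f w t - f z| ≤ 2 * C :=
  abs_kantorovichMean_sub_le hw (hf.integrableOn_isCompact isCompact_Icc) fun u _ => by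
    linarith [abs_sub (f u) (f z), hC u, hC z]

theorem abs_kantorovichMean_sub_le_of_dist_lt {f : ℝ → ℝ} {δ η z : ℝ}
    (hf : LocallyIntegrable f) (hfδ : ∀ u, dist u z < δ → |f u - f z| ≤ η) {w t : ℝ}
    (hw : 0 < w) (hwδ : 1 / w ≤ δ / 2)
    (hzt : |z - t| < δ / 2) :
    |kantorovichMean f w t - f z| ≤ η := by
  refine abs_kantorovichMean_sub_le hw (hf.integrableOn_isCompact isCompact_Icc) fun u hu => ?_
  refine hfδ u ?_
  rw [Real.dist_eq, abs_lt]
  rw [abs_lt] at hzt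
  constructor <;> linarith [hu.1, hu.2]

theorem continuous_kantorovichMean {f : ℝ → ℝ} (hf : LocallyIntegrable f) {w : ℝ}
    (hw : 0 < w) :
    Continuous (kantorovichMean f w) := by
  have hf' (a b : ℝ) : IntervalIntegrable f volume a b :=
    (hf.integrableOn_isCompact isCompact_uIcc).intervalIntegrable
  have hprim := intervalIntegral.continuous_primitive hf' 0
  have hmean : kantorovichMean f w
      = fun t => (w / 2) * ((∫ u in 0..t + 1 / w, f u) - ∫ u in 0..t - 1 / w, f u) := by
    funext t
    rw [kantorovichMean, integral_Icc_eq_integral_Ioc,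
      ← intervalIntegral.integral_of_le (by linarith [one_div_pos.2 hw]),
      intervalIntegral.integral_interval_sub_left (hf' _ _) (hf' _ _)]
  rw [hmean]
  exact continuous_const.mul
    ((hprim.comp (continuous_add_const _)).sub (hprim.comp (continuous_sub_right _)))

theorem abs_integral_mul_sub_le {α : Type*} [MeasurableSpace α] {μ : Measure α}
    {g F : α → ℝ} {s : Set α} {c B η : ℝ} (hg : Integrable g μ)
    (hg_one : ∫ x, g x ∂μ = 1) (hF : AEStronglyMeasurable F μ) (hs : MeasurableSet s)
    (hB : ∀ x, |F x - c| ≤ B) (hη : ∀ x ∉ s, |F x - c| ≤ η) (hη0 : 0 ≤ η) :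
    |(∫ x, g x * F x ∂μ) - c| ≤ B * ∫ x in s, |g x| ∂μ + η * ∫ x, |g x| ∂μ := by
  have hgF : Integrable (fun x => g x * (F x - c)) μ :=
    hg.mul_bdd (hF.sub aestronglyMeasurable_const) (ae_of_all _ hB)
  have hgF' : Integrable (fun x => |g x| * |F x - c|) μ := by
    simpa only [abs_mul] using hgF.abs
  have hdiff : (∫ x, g x * F x ∂μ) - c = ∫ x, g x * (F x - c) ∂μ := by
    have hsplit : (fun x => g x * F x) = fun x => g x * (F x - c) + g x * c := by
      funext x; ring
    rw [hsplit, integral_add hgF (hg.mul_const c), integral_mul_const, hg_one, one_mul,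
      add_sub_cancel_right]
  calc |(∫ x, g x * F x ∂μ) - c| ≤ ∫ x, |g x| * |F x - c| ∂μ := by
        simpa only [hdiff, abs_mul] using
          abs_integral_le_integral_abs (f := fun x => g x * (F x - c))
    _ = (∫ x in s, |g x| * |F x - c| ∂μ) + ∫ x in sᶜ, |g x| * |F x - c| ∂μ :=
        (integral_add_compl hs hgF').symm
    _ ≤ (∫ x in s, |g x| * B ∂μ) + ∫ x in sᶜ, |g x| * η ∂μ := add_le_add
        (setIntegral_mono_on hgF'.integrableOn (hg.abs.mul_const B).integrableOn hs
          fun x _ => mul_le_mul_of_nonneg_left (hB x) (abs_nonneg _))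
        (setIntegral_mono_on hgF'.integrableOn (hg.abs.mul_const η).integrableOn hs.compl
          fun x hx => mul_le_mul_of_nonneg_left (hη x hx) (abs_nonneg _))
    _ ≤ B * ∫ x in s, |g x| ∂μ + η * ∫ x, |g x| ∂μ := by
        rw [integral_mul_const, integral_mul_const, mul_comm, mul_comm _ η]
        exact add_le_add_right (mul_le_mul_of_nonneg_left
          (setIntegral_le_integral hg.abs (ae_of_all _ fun x => abs_nonneg _)) hη0) _

theorem kantorovich_convolution_uniform_convergence_general
    (f χ : ℝ → ℝ)
    (hf_bdd : ∃ C, ∀ x, |f x| ≤ C)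
    (hf_uc : UniformContinuous f)
    (hχ_int : Integrable χ)
    (hχ_norm : ∀ z : ℝ, ∫ t, χ (z - t) = 1)
    (hχ_conc : ∀ γ > (0:ℝ), ∀ ε > (0:ℝ), ∃ W : ℝ, ∀ w ≥ W, ∀ z : ℝ,
      ∫ t in {t : ℝ | γ ≤ |z - t|}, |w * χ (w * (z - t))| < ε) :
    ∀ ε > (0:ℝ), ∃ W : ℝ, ∀ w ≥ W, ∀ z : ℝ,
      |(∫ t, (w * χ (w * (z - t))) *
          ((w / 2) * ∫ u in Set.Icc (t - 1 / w) (t + 1 / w), f u)) - f z| < ε := by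
  obtain ⟨C, hC⟩ := hf_bdd
  have hC0 : 0 ≤ C := (abs_nonneg _).trans (hC 0)
  have hf := hf_uc.continuous.locallyIntegrable (μ := volume)
  have hχ_one : ∫ u, χ u = 1 := by rw [← hχ_norm 0, integral_sub_left_eq_self χ volume 0]
  set M := ∫ u, |χ u|
  have hM0 : 0 ≤ M := integral_nonneg fun u => abs_nonneg _
  intro ε hε
  obtain ⟨δ, hδ, hfδ⟩ :=
    Metric.uniformContinuous_iff.mp hf_uc (ε / (2 * (M + 1))) (by positivity)
  obtain ⟨W, hW⟩ := hχ_conc (δ / 2) (by positivity) (ε / (4 * (C + 1))) (by positivity)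
  refine ⟨max W (2 / δ), fun w hw z => ?_⟩
  rw [ge_iff_le, max_le_iff] at hw
  have hw0 : 0 < w := lt_of_lt_of_le (by positivity) hw.2
  have hwδ : 1 / w ≤ δ / 2 := by
    rw [div_le_iff₀ hw0]; rw [div_le_iff₀ hδ] at hw; linarith
  have hfar (t : ℝ) : |kantorovichMean f w t - f z| ≤ 2 * (C + 1) :=
    (abs_kantorovichMean_sub_le_two_mul hf hC hw0 t z).trans (by linarith)
  have hnear (t : ℝ) (ht : t ∉ {t : ℝ | δ / 2 ≤ |z - t|}) :
      |kantorovichMean f w t - f z| ≤ ε / (2 * (M + 1)) :=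
    abs_kantorovichMean_sub_le_of_dist_lt hf (fun u hu => (Real.dist_eq _ _ ▸ hfδ hu).le)
      hw0 hwδ (not_le.mp ht)
  have key := abs_integral_mul_sub_le (hχ_int.mul_comp_mul_sub hw0.ne' z)
    (by rw [integral_mul_comp_mul_sub χ hw0, hχ_one])
    (continuous_kantorovichMean hf hw0).aestronglyMeasurable
    (measurableSet_le measurable_const (by fun_prop)) hfar hnear (by positivity)
  rw [integral_abs_mul_comp_mul_sub χ hw0] at key
  calc _ ≤ _ := key
    _ < 2 * (C + 1) * (ε / (4 * (C + 1))) + ε / (2 * (M + 1)) * (M + 1) := by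
      gcongr
      · exact hW w hw.1 z
      · linarith
    _ = ε := by field_simp; ring

/-- uniform convergence of Kantorovich convolution operators
built from the scaled kernel `χ_w(u) = w χ(w u)` for bounded uniformly
continuous `f`. -/
theorem kantorovich_convolution_uniform_convergence
    (f χ : ℝ → ℝ)
    (hf_bdd : ∃ C, ∀ x, |f x| ≤ C)
    (hf_uc : UniformContinuous f)
    (hχ_int : Integrable χ)
    (hχ_bdd : ∃ K, ∀ u, |χ u| ≤ K)
    (hχ_norm : ∀ z : ℝ, ∫ t, χ (z - t) = 1)
    (hχ_abs : ∃ M : ℝ, ∀ z : ℝ, ∫ t, |χ (z - t)| ≤ M)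
    (hχ_conc : ∀ γ > (0:ℝ), ∀ ε > (0:ℝ), ∃ W : ℝ, ∀ w ≥ W, ∀ z : ℝ,
      ∫ t in {t : ℝ | γ ≤ |z - t|}, |w * χ (w * (z - t))| < ε) :
    ∀ ε > (0:ℝ), ∃ W : ℝ, ∀ w ≥ W, ∀ z : ℝ,
      |(∫ t, (w * χ (w * (z - t))) *
          ((w / 2) * ∫ u in Set.Icc (t - 1 / w) (t + 1 / w), f u)) - f z| < ε :=
  kantorovich_convolution_uniform_convergence_general f χ hf_bdd hf_uc hχ_int hχ_norm hχ_conc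
end

section
/- Let χ ∈ L¹(ℝ) be bounded with ∑_{k∈ℤ} χ(u − k) = 1 for all u ∈ ℝ and sup_u ∑_{k∈ℤ} |χ(u − k)| = M < ∞, and suppose for every γ > 0, ∑_{|u−k| ≥ γ w} |χ(u − k)| → 0 as w → ∞ uniformly in u. Then for every bounded uniformly continuous f : ℝ → ℝ, the Kantorovich sampling series S_w f(z) = ∑_{k∈ℤ} χ(wz − k) · w ∫_{k/w}^{(k+1)/w} f(u) du converges to f uniformly on ℝ as w → ∞. -/
/-!
Because `∑ₖ χ(wz - k) = 1`, the error `S_w f(z) - f(z)` is `∑ₖ χ(wz - k) (Aₖ - f(z))`, where `Aₖ`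
is the mean of `f` over `[k/w, (k+1)/w]`. When `|wz - k| < δw/2` and `w ≥ 2/δ`, that interval lies
within `δ` of `z`, so uniform continuity makes `|Aₖ - f(z)|` small and these terms contribute at
most `M` times as much. The other terms are bounded by `2‖f‖_∞` times the tail
`∑_{|wz - k| ≥ δw/2} |χ(wz - k)|`, which is small uniformly in `z`.
-/

open MeasureTheory Set

theorem norm_tsum_smul_sub_le {ι E : Type*} [NormedAddCommGroup E] [NormedSpace ℝ E]
    [CompleteSpace E] {a : ι → ℝ} {b : ι → E} {y : E} {M D η : ℝ} (s : Set ι)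
    (ha : Summable fun i => |a i|) (ha₁ : ∑' i, a i = 1) (haM : ∑' i, |a i| ≤ M)
    (hD : ∀ i, ‖b i - y‖ ≤ D) (hη₀ : 0 ≤ η) (hη : ∀ i ∉ s, ‖b i - y‖ ≤ η) :
    ‖∑' i, a i • b i - y‖ ≤ D * ∑' i : s, |a i| + M * η := by
  have hterm : ∀ i, ‖a i • (b i - y)‖ = |a i| * ‖b i - y‖ := fun i => by
    rw [norm_smul, Real.norm_eq_abs]
  have hsum : Summable fun i => |a i| * ‖b i - y‖ :=
    (ha.mul_right D).of_nonneg_of_le (fun i => by positivity)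
      fun i => mul_le_mul_of_nonneg_left (hD i) (abs_nonneg _)
  have hdev : Summable fun i => a i • (b i - y) :=
    .of_norm_bounded hsum fun i => (hterm i).le
  have hay : Summable fun i => a i • y := ha.of_abs.smul_const y
  have hrecenter : ∑' i, a i • b i - y = ∑' i, a i • (b i - y) := by
    have hab : Summable fun i => a i • b i := by
      simpa only [smul_sub, sub_add_cancel] using hdev.add hay
    simp only [smul_sub]
    rw [hab.tsum_sub hay, ha.of_abs.tsum_smul_const, ha₁, one_smul]
  have hfar : ∑' i : s, |a i| * ‖b i - y‖ ≤ D * ∑' i : s, |a i| :=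
    calc ∑' i : s, |a i| * ‖b i - y‖ ≤ ∑' i : s, |a i| * D :=
          (hsum.subtype _).tsum_le_tsum
            (fun i => mul_le_mul_of_nonneg_left (hD i) (abs_nonneg _))
            ((ha.subtype _).mul_right D)
      _ = D * ∑' i : s, |a i| := by rw [tsum_mul_right, mul_comm]
  have hnear : ∑' i : ↑sᶜ, |a i| * ‖b i - y‖ ≤ M * η :=
    calc ∑' i : ↑sᶜ, |a i| * ‖b i - y‖ ≤ ∑' i : ↑sᶜ, |a i| * η :=
          (hsum.subtype _).tsum_le_tsum
            (fun i => mul_le_mul_of_nonneg_left (hη i i.2) (abs_nonneg _))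
            ((ha.subtype _).mul_right η)
      _ = (∑' i : ↑sᶜ, |a i|) * η := tsum_mul_right
      _ ≤ M * η := mul_le_mul_of_nonneg_right
          ((ha.tsum_subtype_le _ _ fun i => abs_nonneg _).trans haM) hη₀
  calc ‖∑' i, a i • b i - y‖ = ‖∑' i, a i • (b i - y)‖ := by rw [hrecenter]
    _ ≤ ∑' i, |a i| * ‖b i - y‖ := by
        simpa only [hterm] using
          norm_tsum_le_tsum_norm (f := fun i => a i • (b i - y)) (by simpa only [hterm] using hsum)
    _ = ∑' i : s, |a i| * ‖b i - y‖ + ∑' i : ↑sᶜ, |a i| * ‖b i - y‖ :=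
        (hsum.tsum_subtype_add_tsum_subtype_compl s).symm
    _ ≤ D * ∑' i : s, |a i| + M * η := add_le_add hfar hnear

theorem norm_setAverage_sub_le {α E : Type*} [MeasurableSpace α] [NormedAddCommGroup E]
    [NormedSpace ℝ E] [CompleteSpace E] {μ : Measure α} {s : Set α} {f : α → E} {y : E} {c : ℝ}
    (hs₀ : μ s ≠ 0) (hs : μ s ≠ ⊤) (hf : IntegrableOn f s μ) (hc : ∀ x ∈ s, ‖f x - y‖ ≤ c) :
    ‖(⨍ x in s, f x ∂μ) - y‖ ≤ c := by
  have hpos : 0 < μ.real s := ENNReal.toReal_pos hs₀ hs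
  have hrecenter : (⨍ x in s, f x ∂μ) - y = (μ.real s)⁻¹ • ∫ x in s, (f x - y) ∂μ := by
    rw [integral_sub hf (integrableOn_const hs), setIntegral_const, smul_sub, ← setAverage_eq,
      smul_smul, inv_mul_cancel₀ hpos.ne', one_smul]
  calc ‖(⨍ x in s, f x ∂μ) - y‖ ≤ (μ.real s)⁻¹ * (c * μ.real s) := by
        rw [hrecenter, norm_smul, norm_inv, Real.norm_of_nonneg hpos.le]
        gcongr
        exact norm_setIntegral_le_of_norm_le_const hs.lt_top hc
    _ = c := by field_simp

theorem norm_smul_setIntegral_Icc_div_sub_le {E : Type*} [NormedAddCommGroup E]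
    [NormedSpace ℝ E] [CompleteSpace E] {f : ℝ → E} {w k c : ℝ} {y : E} (hw : 0 < w)
    (hf : IntegrableOn f (Icc (k / w) ((k + 1) / w)))
    (hc : ∀ u ∈ Icc (k / w) ((k + 1) / w), ‖f u - y‖ ≤ c) :
    ‖w • (∫ u in Icc (k / w) ((k + 1) / w), f u) - y‖ ≤ c := by
  have hkw : k / w < (k + 1) / w := div_lt_div_of_pos_right (lt_add_one k) hw
  have hmean : w • ∫ u in Icc (k / w) ((k + 1) / w), f u =
      ⨍ u in Icc (k / w) ((k + 1) / w), f u := by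
    rw [setAverage_eq, Real.volume_real_Icc_of_le hkw.le, ← sub_div, add_sub_cancel_left,
      inv_div, div_one]
  rw [hmean]
  exact norm_setAverage_sub_le (by simpa [Real.volume_Icc] using hkw) measure_Icc_lt_top.ne hf hc

theorem abs_sub_lt_of_mem_Icc_div {w z u γ k : ℝ} (hw : 0 < w) (hk : |w * z - k| < γ * w)
    (hu : u ∈ Icc (k / w) ((k + 1) / w)) : |u - z| < γ + 1 / w := by
  have hku : k ≤ w * u := (div_le_iff₀' hw).mp hu.1
  have huk : w * u ≤ k + 1 := (le_div_iff₀' hw).mp hu.2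
  have hscaled : |u - z| * w = |w * u - w * z| := by
    rw [← mul_sub, abs_mul, abs_of_pos hw, mul_comm]
  refine lt_of_mul_lt_mul_right ?_ hw.le
  rw [hscaled, add_mul, one_div_mul_cancel hw.ne']
  rw [abs_sub_lt_iff] at hk ⊢
  constructor <;> linarith

noncomputable def kantorovichSeries (χ f : ℝ → ℝ) (w z : ℝ) : ℝ :=
  ∑' k : ℤ, χ (w * z - k) * (w * ∫ u in Icc ((k : ℝ) / w) ((k + 1 : ℝ) / w), f u)

theorem abs_kantorovichSeries_sub_le {χ f : ℝ → ℝ} {M C δ η w z : ℝ}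
    (hχ_part : ∑' k : ℤ, χ (w * z - k) = 1) (hχ_abs : ∑' k : ℤ, |χ (w * z - k)| ≤ M)
    (hχ_summ : Summable fun k : ℤ => |χ (w * z - k)|) (hf : Continuous f) (hC : ∀ x, |f x| ≤ C)
    (hfδ : ∀ u, |u - z| < δ → |f u - f z| ≤ η) (hδ : 0 < δ) (hδw : 2 / δ ≤ w) :
    |kantorovichSeries χ f w z - f z| ≤
      2 * C * ∑' k : {k : ℤ // δ / 2 * w ≤ |w * z - k|}, |χ (w * z - k)| + M * η := by
  have hw₀ : 0 < w := (by positivity : 0 < 2 / δ).trans_le hδw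
  have hw₁ : 1 / w ≤ δ / 2 := by
    rw [div_le_iff₀ hw₀]; rw [div_le_iff₀ hδ] at hδw; linarith
  have hη : 0 ≤ η := (abs_nonneg _).trans (hfδ z (by simpa using hδ))
  have hmean (k : ℤ) {c : ℝ} (hc : ∀ u ∈ Icc ((k : ℝ) / w) ((k + 1 : ℝ) / w), |f u - f z| ≤ c) :
      ‖w * (∫ u in Icc ((k : ℝ) / w) ((k + 1 : ℝ) / w), f u) - f z‖ ≤ c :=
    norm_smul_setIntegral_Icc_div_sub_le hw₀ hf.integrableOn_Icc hc
  have hnear (k : ℤ) (hk : k ∉ {k : ℤ | δ / 2 * w ≤ |w * z - k|}) :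
      ‖w * (∫ u in Icc ((k : ℝ) / w) ((k + 1 : ℝ) / w), f u) - f z‖ ≤ η :=
    hmean k fun u hu => hfδ u <| by
      linarith [abs_sub_lt_of_mem_Icc_div hw₀ (not_le.mp hk) hu]
  exact norm_tsum_smul_sub_le (a := fun k : ℤ => χ (w * z - k)) _ hχ_summ hχ_part hχ_abs
    (fun k => hmean k (c := 2 * C) fun u _ => (abs_sub _ _).trans (by linarith [hC u, hC z]))
    hη hnear

theorem sampling_kantorovich_uniform_convergence_general
    (χ f : ℝ → ℝ) (M : ℝ)
    (hχ_part : ∀ u : ℝ, ∑' k : ℤ, χ (u - k) = 1)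
    (hχ_abs : ∀ u : ℝ, ∑' k : ℤ, |χ (u - k)| ≤ M)
    (hχ_summ : ∀ u : ℝ, Summable (fun k : ℤ => |χ (u - k)|))
    (hχ_conc : ∀ γ > (0:ℝ), ∀ ε > (0:ℝ), ∃ W : ℝ, ∀ w ≥ W, ∀ u : ℝ,
      ∑' k : {k : ℤ // γ * w ≤ |u - k|}, |χ (u - (k : ℤ))| < ε)
    (hf_bdd : ∃ C, ∀ x, |f x| ≤ C)
    (hf_uc : UniformContinuous f) :
    ∀ ε > (0:ℝ), ∃ W : ℝ, ∀ w ≥ W, ∀ z : ℝ,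
      |(∑' k : ℤ, χ (w * z - k) *
          (w * ∫ u in Set.Icc ((k : ℝ) / w) ((k + 1 : ℝ) / w), f u)) - f z| < ε := by
  obtain ⟨C, hC⟩ := hf_bdd
  have hC₀ : 0 ≤ C := (abs_nonneg _).trans (hC 0)
  have hM₀ : 0 ≤ M := (tsum_nonneg fun k => abs_nonneg _).trans (hχ_abs 0)
  intro ε hε
  obtain ⟨δ, hδ, hfδ⟩ := Metric.uniformContinuous_iff.mp hf_uc (ε / (2 * (M + 1))) (by positivity)
  obtain ⟨W, hW⟩ := hχ_conc (δ / 2) (by positivity) (ε / (2 * (2 * C + 1))) (by positivity)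
  refine ⟨max W (2 / δ), fun w hw z => ?_⟩
  change |kantorovichSeries χ f w z - f z| < ε
  have htail := hW w (le_of_max_le_left hw) (w * z)
  have htail₀ : 0 ≤ ∑' k : {k : ℤ // δ / 2 * w ≤ |w * z - k|}, |χ (w * z - k)| :=
    tsum_nonneg fun k => abs_nonneg _
  have herr := abs_kantorovichSeries_sub_le (η := ε / (2 * (M + 1))) (z := z)
    (hχ_part _) (hχ_abs _) (hχ_summ _) hf_uc.continuous hC (fun u hu => (hfδ hu).le) hδ
    (le_of_max_le_right hw)
  have hhalf₁ : (2 * C + 1) * (ε / (2 * (2 * C + 1))) = ε / 2 := by field_simp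
  have hhalf₂ : (M + 1) * (ε / (2 * (M + 1))) = ε / 2 := by field_simp
  nlinarith [mul_le_mul_of_nonneg_left htail.le (by positivity : (0 : ℝ) ≤ 2 * C + 1),
    (by positivity : 0 < ε / (2 * (M + 1)))]

/-- uniform convergence of the sampling Kantorovich series
`S_w f(z) = ∑_k χ(wz - k) · w ∫_{k/w}^{(k+1)/w} f` for bounded uniformly
continuous `f`. -/
theorem sampling_kantorovich_uniform_convergence
    (χ f : ℝ → ℝ) (M : ℝ)
    (hχ_int : Integrable χ)
    (hχ_bdd : ∃ K, ∀ u, |χ u| ≤ K)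
    (hχ_part : ∀ u : ℝ, ∑' k : ℤ, χ (u - k) = 1)
    (hχ_abs : ∀ u : ℝ, ∑' k : ℤ, |χ (u - k)| ≤ M)
    (hχ_summ : ∀ u : ℝ, Summable (fun k : ℤ => |χ (u - k)|))
    (hχ_conc : ∀ γ > (0:ℝ), ∀ ε > (0:ℝ), ∃ W : ℝ, ∀ w ≥ W, ∀ u : ℝ,
      ∑' k : {k : ℤ // γ * w ≤ |u - k|}, |χ (u - (k : ℤ))| < ε)
    (hf_bdd : ∃ C, ∀ x, |f x| ≤ C)
    (hf_uc : UniformContinuous f) :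
    ∀ ε > (0:ℝ), ∃ W : ℝ, ∀ w ≥ W, ∀ z : ℝ,
      |(∑' k : ℤ, χ (w * z - k) *
          (w * ∫ u in Set.Icc ((k : ℝ) / w) ((k + 1 : ℝ) / w), f u)) - f z| < ε :=
  sampling_kantorovich_uniform_convergence_general χ f M hχ_part hχ_abs hχ_summ hχ_conc hf_bdd hf_uc
end
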